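/- In the principle of triality, uniqueness holds at the identity: if α₁, α₂ are ℝ-linear maps of the octonions with (α₁x)(α₂y) = xy for all x, y, then α₁ = α₂ = 1 or α₁ = α₂ = −1. -/

import Mathlib

/-!
The real octonion (Cayley) algebra `𝕆`, realized via the Cayley–Dickson
construction on the real quaternions: elements are pairs of quaternions with
multiplication `(a,b)(c,d) = (ac − d̄b, da + bc̄)`.
-/

noncomputable section

def Octonion : Type := Quaternion ℝ × Quaternion ℝ

instance : AddCommGroup Octonion :=
  inferInstanceAs (AddCommGroup (Quaternion ℝ × Quaternion ℝ))

instance : Module ℝ Octonion :=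
  inferInstanceAs (Module ℝ (Quaternion ℝ × Quaternion ℝ))

/-- Cayley–Dickson multiplication. -/
instance : Mul Octonion :=
  ⟨fun x y => ((x.1 * y.1 - star y.2 * x.2, y.2 * x.1 + x.2 * star y.1) :
      Quaternion ℝ × Quaternion ℝ)⟩

instance : One Octonion := ⟨((1, 0) : Quaternion ℝ × Quaternion ℝ)⟩

/-- Octonion conjugation `x ↦ x̄`. -/
def oconj (x : Octonion) : Octonion := ((star x.1, -x.2) : Quaternion ℝ × Quaternion ℝ)

/-- The real part `R(x)` of an octonion (the coefficient of `1`). -/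
def ore (x : Octonion) : ℝ := x.1.re

/-- The standard (positive definite) inner product `(x, y)` on the octonions;
it satisfies `(x,y)·1 = ½(x̄y + ȳx)`. -/
def oinner (x y : Octonion) : ℝ := (x.1 * star y.1).re + (x.2 * star y.2).re

/-- The norm `|x| = √(x,x)` of an octonion. -/
def onorm (x : Octonion) : ℝ := Real.sqrt (oinner x x)

/-! Setting `y = 1` gives `α₁ x * b = x` for `b = α₂ 1`, so right multiplication by `b` is
onto, hence bijective by finite dimensionality, with inverse `α₁`. Setting `x = u * b` then
gives `α₂ y = b * y` and `(u * b) * y = u * (b * y)` for all `u, y`. Testing this on pairs of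
quaternions shows that `b` is real, and `|b| = |α₂ 1| = 1` leaves `b = ±1`. -/

open scoped Quaternion

namespace Quaternion

def basisI : ℍ[ℝ] := ⟨0, 1, 0, 0⟩

def basisJ : ℍ[ℝ] := ⟨0, 0, 1, 0⟩

lemma not_commute_basisI_basisJ : ¬Commute basisI basisJ := by
  intro h
  have hk := congrArg QuaternionAlgebra.imK h.eq
  simp only [imK_mul] at hk
  norm_num [basisI, basisJ] at hk

lemma eq_coe_re_of_forall_mul_comm {p : ℍ[ℝ]} (hp : ∀ w : ℍ[ℝ], w * p = p * w) :
    p = (p.re : ℍ[ℝ]) := by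
  have hi := Quaternion.ext_iff.1 (hp basisI)
  have hj := Quaternion.ext_iff.1 (hp basisJ)
  simp only [imI_mul, imJ_mul, imK_mul] at hi hj
  simp [basisI, basisJ] at hi hj
  ext <;> simp <;> linarith

lemma eq_zero_of_forall_mul_mul_comm {q : ℍ[ℝ]} (hq : ∀ u v : ℍ[ℝ], q * u * v = q * v * u) :
    q = 0 := by
  by_contra hq0
  exact not_commute_basisI_basisJ
    (mul_left_cancel₀ hq0 (by simpa only [mul_assoc] using hq basisI basisJ))

end Quaternion

namespace Octonion

def mk (a b : ℍ[ℝ]) : Octonion := (a, b)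

@[ext]
lemma ext {x y : Octonion} (h₁ : x.1 = y.1) (h₂ : x.2 = y.2) : x = y :=
  Prod.ext h₁ h₂

@[simp] lemma fst_mk (a b : ℍ[ℝ]) : (mk a b).1 = a := rfl
@[simp] lemma snd_mk (a b : ℍ[ℝ]) : (mk a b).2 = b := rfl
@[simp] lemma fst_mul (x y : Octonion) : (x * y).1 = x.1 * y.1 - star y.2 * x.2 := rfl
@[simp] lemma snd_mul (x y : Octonion) : (x * y).2 = y.2 * x.1 + x.2 * star y.1 := rfl
@[simp] lemma fst_add (x y : Octonion) : (x + y).1 = x.1 + y.1 := rfl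
@[simp] lemma snd_add (x y : Octonion) : (x + y).2 = x.2 + y.2 := rfl
@[simp] lemma fst_zero : (0 : Octonion).1 = 0 := rfl
@[simp] lemma snd_zero : (0 : Octonion).2 = 0 := rfl
@[simp] lemma fst_one : (1 : Octonion).1 = 1 := rfl
@[simp] lemma snd_one : (1 : Octonion).2 = 0 := rfl
@[simp] lemma fst_smul (r : ℝ) (x : Octonion) : (r • x).1 = r • x.1 := rfl
@[simp] lemma snd_smul (r : ℝ) (x : Octonion) : (r • x).2 = r • x.2 := rfl

/- Scoped: were they global, `*` and `-` on `Octonion` would elaborate through these structures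
rather than through the instances of the definitions above. -/
scoped instance : NonUnitalNonAssocRing Octonion where
  left_distrib x y z := by ext1 <;> simp <;> noncomm_ring
  right_distrib x y z := by ext1 <;> simp <;> noncomm_ring
  zero_mul x := by ext1 <;> simp
  mul_zero x := by ext1 <;> simp

scoped instance : MulOneClass Octonion where
  one_mul x := by ext1 <;> simp
  mul_one x := by ext1 <;> simp

scoped instance : IsScalarTower ℝ Octonion Octonion where
  smul_assoc r x y := by ext1 <;> simp [smul_sub, smul_add]

scoped instance : FiniteDimensional ℝ Octonion :=
  inferInstanceAs (FiniteDimensional ℝ (ℍ[ℝ] × ℍ[ℝ]))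

lemma injective_mul_right_of_surjective {b : Octonion} (hb : Function.Surjective (· * b)) :
    Function.Injective (· * b) :=
  (LinearMap.injective_iff_surjective (f := LinearMap.mulRight ℝ b)).2 hb

lemma eq_smul_one_of_mul_assoc {b : Octonion} (hb : ∀ x y : Octonion, x * b * y = x * (b * y)) :
    b = ore b • 1 := by
  have hcomm : ∀ w, w * b.1 = b.1 * w := fun w => by
    simpa using congrArg Prod.snd (hb (mk w 0) (mk 0 1))
  have hsnd : ∀ u v, b.2 * u * v = b.2 * v * u := fun u v => by
    simpa using congrArg Prod.snd (hb (mk u 0) (mk (star v) 0))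
  ext1
  · rw [fst_smul, fst_one, ← Quaternion.coe_one, Quaternion.smul_coe, mul_one]
    exact Quaternion.eq_coe_re_of_forall_mul_comm hcomm
  · simpa using Quaternion.eq_zero_of_forall_mul_mul_comm hsnd

lemma oinner_smul_one_self (r : ℝ) : oinner (r • 1) (r • 1) = r * r := by
  simp [oinner]

lemma eq_one_or_eq_neg_one_of_mul_assoc {b : Octonion}
    (hb : ∀ x y : Octonion, x * b * y = x * (b * y)) (hnorm : oinner b b = oinner 1 1) :
    b = 1 ∨ b = -1 := by
  obtain ⟨r, rfl⟩ : ∃ r : ℝ, b = r • 1 := ⟨_, eq_smul_one_of_mul_assoc hb⟩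
  rw [oinner_smul_one_self, ← one_smul ℝ 1, oinner_smul_one_self, mul_one] at hnorm
  rcases mul_self_eq_one_iff.1 hnorm with rfl | rfl <;> simp

end Octonion

theorem octonion_triality_uniqueness_general (α₁ α₂ : Octonion → Octonion)
    (h₂inner : ∀ x y, oinner (α₂ x) (α₂ y) = oinner x y)
    (h : ∀ x y, α₁ x * α₂ y = x * y) :
    ((∀ x, α₁ x = x) ∧ (∀ x, α₂ x = x)) ∨
      ((∀ x, α₁ x = -x) ∧ (∀ x, α₂ x = -x)) := by
  open Octonion in
  set b := α₂ 1
  have hα₁b : ∀ x, α₁ x * b = x := fun x => by simpa using h x 1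
  have hα₁ : ∀ u, α₁ (u * b) = u :=
    Function.LeftInverse.rightInverse_of_injective (f := (· * b)) hα₁b
      (injective_mul_right_of_surjective fun x => ⟨α₁ x, hα₁b x⟩)
  have hα₁_b : α₁ b = 1 := by simpa using hα₁ 1
  have hα₂ : ∀ y, α₂ y = b * y := fun y => by simpa [hα₁_b] using h b y
  have hassoc : ∀ u y, u * b * y = u * (b * y) := fun u y => by
    rw [← hα₂, ← h (u * b) y, hα₁]
  rcases eq_one_or_eq_neg_one_of_mul_assoc hassoc (h₂inner 1 1) with hb | hb
  · exact Or.inl ⟨fun x => by simpa [hb] using hα₁b x, fun y => by simpa [hb] using hα₂ y⟩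
  · exact Or.inr ⟨fun x => neg_eq_iff_eq_neg.1 (by simpa [hb] using hα₁b x),
      fun y => by simpa [hb] using hα₂ y⟩

/-- Uniqueness in the principle of triality at the identity:
if `α₁, α₂` are orthogonal `ℝ`-linear transformations of the octonions with
`(α₁x)(α₂y) = xy` for all `x, y`, then `α₁ = α₂ = 1` or `α₁ = α₂ = −1`. -/
theorem octonion_triality_uniqueness (α₁ α₂ : Octonion → Octonion)
    (h₁add : ∀ x y, α₁ (x + y) = α₁ x + α₁ y)
    (h₁smul : ∀ (r : ℝ) (x : Octonion), α₁ (r • x) = r • α₁ x)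
    (h₁inner : ∀ x y, oinner (α₁ x) (α₁ y) = oinner x y)
    (h₂add : ∀ x y, α₂ (x + y) = α₂ x + α₂ y)
    (h₂smul : ∀ (r : ℝ) (x : Octonion), α₂ (r • x) = r • α₂ x)
    (h₂inner : ∀ x y, oinner (α₂ x) (α₂ y) = oinner x y)
    (h : ∀ x y, α₁ x * α₂ y = x * y) :
    ((∀ x, α₁ x = x) ∧ (∀ x, α₂ x = x)) ∨
      ((∀ x, α₁ x = -x) ∧ (∀ x, α₂ x = -x)) :=
  octonion_triality_uniqueness_general α₁ α₂ h₂inner h
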